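/- (Jirásek–Grassl plastic correction, converse direction.) Assume ϱ^tr > 0 and f̂(p^tr, ϱ^tr, ϱ_e(σ^tr)) > 0. Let (p, ϱ, Δλ) with Δλ > 0 and ϱ ≥ 0 solve the reduced system: p = p^tr − Δλ·K·m_g'(p)/f̄_c, ϱ = max(0, ϱ^tr − Δλ·2G·(3ϱ/f̄_c² + m₀/(√6·f̄_c))), and f̂(p, ϱ, ϱ·r_e(cos θ(σ^tr))) = 0. Define σ = p·I + ϱ·(s^tr/ϱ^tr) if ϱ^tr > Δλ·2G·(3ϱ/f̄_c² + m₀/(√6·f̄_c)), and σ = p·I otherwise. Then p(σ) = p, ϱ(σ) = ϱ, there exists n̂ ∈ ∂ϱ(σ) with σ = σ^tr − Δλ·[K·(m_g'(p(σ))/f̄_c)·I + 2G·(3ϱ(σ)/f̄_c² + m₀/(√6·f̄_c))·n̂], and f̂(p(σ), ϱ(σ), ϱ_e(σ)) = 0. -/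

import Mathlib

open Matrix

noncomputable section

/-- The space of real 3×3 matrices (we restrict to symmetric ones via `Matrix.IsSymm`). -/
abbrev Mat3 := Matrix (Fin 3) (Fin 3) ℝ

/-- Frobenius inner product (for symmetric matrices): ⟨A,B⟩ = tr(A·B). -/
def finner (A B : Mat3) : ℝ := (A * B).trace

/-- Norm induced by `finner` (Frobenius norm on symmetric matrices). -/
def fnorm (A : Mat3) : ℝ := Real.sqrt (finner A A)

/-- Hydrostatic pressure: p(σ) = tr(σ)/3. -/
def pvol (σ : Mat3) : ℝ := σ.trace / 3

/-- Deviatoric part: dev(σ) = σ − p(σ)·I. -/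
def devm (σ : Mat3) : Mat3 := σ - pvol σ • (1 : Mat3)

/-- ϱ(σ) = ‖dev(σ)‖. -/
def rho (σ : Mat3) : ℝ := fnorm (devm σ)

/-- The subdifferential ∂ϱ(σ): symmetric matrices n̂ with
ϱ(τ) ≥ ϱ(σ) + ⟨n̂, τ − σ⟩ for all symmetric τ. -/
def subgradRho (σ : Mat3) : Set Mat3 :=
  {n : Mat3 | n.IsSymm ∧ ∀ τ : Mat3, τ.IsSymm → rho σ + finner n (τ - σ) ≤ rho τ}

/-- Lode angle θ(σ) = (1/3)·arccos((3√3/2)·J₃/J₂^{3/2}), with J₂ = ϱ²/2 and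
J₃ = tr(dev(σ)³)/3 (meaningful when ϱ(σ) > 0). -/
def lode (σ : Mat3) : ℝ :=
  (1/3) * Real.arccos ((3 * Real.sqrt 3 / 2) *
    ((devm σ * devm σ * devm σ).trace / 3) / Real.rpow (rho σ ^ 2 / 2) (3/2))

/-- Willam–Warnke function r_e with eccentricity parameter e. -/
def rW (e x : ℝ) : ℝ :=
  (4 * (1 - e^2) * x^2 + (2*e - 1)^2) /
    (2 * (1 - e^2) * x + (2*e - 1) * Real.sqrt (4 * (1 - e^2) * x^2 + 5*e^2 - 4*e))

/-- ϱ_e(σ) = ϱ(σ)·r_e(cos θ(σ)) for ϱ(σ) > 0, and ϱ_e(σ) = 0 for ϱ(σ) = 0. -/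
def rhoE (e : ℝ) (σ : Mat3) : ℝ :=
  if rho σ = 0 then 0 else rho σ * rW e (Real.cos (lode σ))

/-- m_g'(p) = A_g·exp((p − f̄_t/3)/(B_g·f̄_c)). -/
def mgp (Ag Bg fc ft p : ℝ) : ℝ := Ag * Real.exp ((p - ft/3) / (Bg * fc))

/-- Jirásek–Grassl yield function f̂(p,ϱ,ϱ_e) = (3/2)(ϱ/f̄_c)² + m₀(ϱ_e/(√6 f̄_c) + p/f̄_c) − 1. -/
def fJG (m0 fc p ϱ ϱe : ℝ) : ℝ :=
  (3/2) * (ϱ/fc)^2 + m0 * (ϱe / (Real.sqrt 6 * fc) + p/fc) - 1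

/-!
The corrected stress keeps the trial deviator's direction: in both branches of its definition
`σ = p • 1 + (ϱ / ϱᵗʳ) • sᵗʳ` (in the apex branch because `ϱ = 0`). Hence `p(σ) = p`, `ϱ(σ) = ϱ`, and
the Lode angle — invariant under positive scaling of the deviator — is that of the trial state, so the
reduced yield condition is the yield condition at `σ`. With `c = Δλ·2G·(3ϱ/f̄_c² + m₀/(√6 f̄_c))`,
the subgradient is `n̂ = sᵗʳ / max(ϱᵗʳ, c)`: the unit normal `sᵗʳ/ϱᵗʳ` in the radial-return case
`c < ϱᵗʳ`, and otherwise a traceless matrix of norm `≤ 1`, which is a subgradient at the apex.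
-/

section Frobenius

lemma finner_eq_sum_of_isSymm (A : Mat3) {B : Mat3} (hB : B.IsSymm) :
    finner A B = ∑ q : Fin 3 × Fin 3, A q.1 q.2 * B q.1 q.2 := by
  simp only [finner, Matrix.trace, Matrix.diag, Matrix.mul_apply, Fintype.sum_prod_type]
  exact Finset.sum_congr rfl fun i _ => Finset.sum_congr rfl fun j _ => by rw [hB.apply]

lemma fnorm_eq_sqrt_sum_sq {A : Mat3} (hA : A.IsSymm) :
    fnorm A = √(∑ q : Fin 3 × Fin 3, A q.1 q.2 ^ 2) := by
  simp only [fnorm, finner_eq_sum_of_isSymm A hA, sq]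

lemma finner_le_fnorm_mul_fnorm {A B : Mat3} (hA : A.IsSymm) (hB : B.IsSymm) :
    finner A B ≤ fnorm A * fnorm B := by
  rw [finner_eq_sum_of_isSymm A hB, fnorm_eq_sqrt_sum_sq hA, fnorm_eq_sqrt_sum_sq hB]
  exact Real.sum_mul_le_sqrt_mul_sqrt _ _ _

lemma finner_self_eq_fnorm_sq {A : Mat3} (hA : A.IsSymm) : finner A A = fnorm A ^ 2 := by
  have h : 0 ≤ finner A A := by
    rw [finner_eq_sum_of_isSymm A hA]
    exact Finset.sum_nonneg fun q _ => mul_self_nonneg _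
  rw [fnorm, Real.sq_sqrt h]

lemma fnorm_smul (a : ℝ) (A : Mat3) : fnorm (a • A) = |a| * fnorm A := by
  have : finner (a • A) (a • A) = a ^ 2 * finner A A := by
    simp only [finner, Matrix.smul_mul, Matrix.mul_smul, Matrix.trace_smul, smul_eq_mul]
    ring
  rw [fnorm, this, Real.sqrt_mul (sq_nonneg a), Real.sqrt_sq_eq_abs, fnorm]

end Frobenius

section Deviator

lemma trace_devm (σ : Mat3) : (devm σ).trace = 0 := by
  simp [devm, pvol, Matrix.trace_sub, Matrix.trace_smul, Matrix.trace_one]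

lemma trace_smul_devm (a : ℝ) (σ : Mat3) : (a • devm σ).trace = 0 := by
  rw [Matrix.trace_smul, trace_devm, smul_zero]

lemma isSymm_devm {σ : Mat3} (hσ : σ.IsSymm) : (devm σ).IsSymm := by
  simp only [devm, Matrix.IsSymm, Matrix.transpose_sub, Matrix.transpose_smul,
    Matrix.transpose_one, hσ.eq]

lemma smul_one_add_devm (σ : Mat3) : pvol σ • (1 : Mat3) + devm σ = σ := by
  rw [devm, add_sub_cancel]

lemma pvol_smul_one_add (p : ℝ) {A : Mat3} (hA : A.trace = 0) : pvol (p • (1 : Mat3) + A) = p := by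
  simp [pvol, Matrix.trace_add, Matrix.trace_smul, Matrix.trace_one, hA]

lemma devm_smul_one_add (p : ℝ) {A : Mat3} (hA : A.trace = 0) : devm (p • (1 : Mat3) + A) = A := by
  rw [devm, pvol_smul_one_add p hA, add_sub_cancel_left]

lemma finner_devm {A : Mat3} (hA : A.trace = 0) (τ : Mat3) : finner A (devm τ) = finner A τ := by
  simp [finner, devm, Matrix.mul_sub, hA]

lemma mem_subgradRho_of_finner_eq {n σ : Mat3} (hn : n.IsSymm) (htr : n.trace = 0) (hle : fnorm n ≤ 1)
    (hσ : finner n σ = rho σ) : n ∈ subgradRho σ := by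
  refine ⟨hn, fun τ hτ => ?_⟩
  have hCS : finner n τ ≤ fnorm n * rho τ := by
    rw [← finner_devm htr]
    exact finner_le_fnorm_mul_fnorm hn (isSymm_devm hτ)
  have hρτ : 0 ≤ rho τ := Real.sqrt_nonneg _
  have : rho σ + finner n (τ - σ) = finner n τ := by
    simp only [finner, Matrix.mul_sub, Matrix.trace_sub] at hσ ⊢
    linarith
  nlinarith

end Deviator

section Homogeneity

variable {σ σ' : Mat3} {k : ℝ}

lemma rho_of_devm_eq_smul (hk : 0 ≤ k) (h : devm σ = k • devm σ') : rho σ = k * rho σ' := by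
  rw [rho, h, fnorm_smul, abs_of_nonneg hk, rho]

lemma lode_of_devm_eq_smul (hk : 0 < k) (h : devm σ = k • devm σ') : lode σ = lode σ' := by
  have htr : (devm σ * devm σ * devm σ).trace = k ^ 3 * (devm σ' * devm σ' * devm σ').trace := by
    simp only [h, Matrix.smul_mul, Matrix.mul_smul, Matrix.trace_smul, smul_eq_mul]
    ring
  have hJ₂ : Real.rpow (rho σ ^ 2 / 2) (3 / 2) = k ^ 3 * Real.rpow (rho σ' ^ 2 / 2) (3 / 2) := by
    rw [rho_of_devm_eq_smul hk.le h, Real.rpow_eq_pow, Real.rpow_eq_pow,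
      show (k * rho σ') ^ 2 / 2 = k ^ 2 * (rho σ' ^ 2 / 2) by ring,
      Real.mul_rpow (sq_nonneg k) (by positivity), ← Real.rpow_natCast_mul hk.le]
    norm_num
  rw [lode, lode, htr, hJ₂]
  congr 2
  field_simp

lemma rhoE_of_devm_eq_smul (e : ℝ) (hk : 0 ≤ k) (h : devm σ = k • devm σ') :
    rhoE e σ = k * rhoE e σ' := by
  rcases hk.eq_or_lt with rfl | hk
  · rw [zero_smul] at h
    simp [rhoE, rho, h, fnorm, finner]
  · have hρ := rho_of_devm_eq_smul hk.le h
    simp only [rhoE, hρ, mul_eq_zero, hk.ne', false_or, lode_of_devm_eq_smul hk h]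
    split_ifs <;> ring

end Homogeneity

section RadialReturn

variable {R : ℝ} (c : ℝ)

lemma max_zero_sub_div_eq_one_sub_div_max (hR : 0 < R) :
    max 0 (R - c) / R = 1 - c / max R c := by
  rcases lt_or_ge c R with h | h
  · rw [max_eq_right (by linarith), max_eq_left h.le]
    field_simp
  · rw [max_eq_left (by linarith), max_eq_right h, div_self (by linarith)]
    simp

lemma max_zero_sub_mul_div_max (hR : 0 < R) :
    max 0 (R - c) * (R / max R c) = max 0 (R - c) := by
  rcases lt_or_ge c R with h | h
  · rw [max_eq_left h.le, div_self hR.ne', mul_one]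
  · rw [max_eq_left (by linarith), zero_mul]

lemma inv_max_smul_devm_mem_subgradRho {σtr σ : Mat3} (hσtr : σtr.IsSymm) (hR : 0 < rho σtr)
    (hσ : devm σ = (max 0 (rho σtr - c) / rho σtr) • devm σtr) :
    (max (rho σtr) c)⁻¹ • devm σtr ∈ subgradRho σ := by
  have hmax : 0 < max (rho σtr) c := lt_max_of_lt_left hR
  refine mem_subgradRho_of_finner_eq ((isSymm_devm hσtr).smul _) (trace_smul_devm _ _) ?_ ?_
  · rw [fnorm_smul, abs_of_pos (inv_pos.mpr hmax), inv_mul_le_one₀ hmax]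
    exact le_max_left _ _
  · have hnorm : finner (devm σtr) (devm σtr) = rho σtr ^ 2 :=
      finner_self_eq_fnorm_sq (isSymm_devm hσtr)
    have hϱ := max_zero_sub_mul_div_max c hR
    rw [← finner_devm (trace_smul_devm _ _), hσ, rho_of_devm_eq_smul (by positivity) hσ]
    simp only [finner, Matrix.smul_mul, Matrix.mul_smul, Matrix.trace_smul, smul_eq_mul] at hnorm ⊢
    rw [hnorm]
    field_simp at hϱ ⊢
    linear_combination hϱ

end RadialReturn

theorem JG_plastic_corrector_converse_general
    (G K m0 fc Ag Bg ft e : ℝ)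
    (σtr : Mat3) (hσtr : σtr.IsSymm) (hϱtr : 0 < rho σtr)
    (p ϱ Δl : ℝ)
    (hpeq : p = pvol σtr - Δl * K * mgp Ag Bg fc ft p / fc)
    (hϱeq : ϱ = max 0 (rho σtr - Δl * (2 * G * (3 * ϱ / fc^2 + m0 / (Real.sqrt 6 * fc)))))
    (hfred : fJG m0 fc p ϱ (ϱ * rW e (Real.cos (lode σtr))) = 0)
    (σ : Mat3)
    (hσdef : σ = if Δl * (2 * G * (3 * ϱ / fc^2 + m0 / (Real.sqrt 6 * fc))) < rho σtr then
        p • (1 : Mat3) + ϱ • ((rho σtr)⁻¹ • devm σtr)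
      else
        p • (1 : Mat3)) :
    pvol σ = p ∧ rho σ = ϱ ∧
    (∃ n ∈ subgradRho σ,
      σ = σtr - Δl • ((K * mgp Ag Bg fc ft (pvol σ) / fc) • (1 : Mat3) +
        (2 * G * (3 * rho σ / fc^2 + m0 / (Real.sqrt 6 * fc))) • n)) ∧
    fJG m0 fc (pvol σ) (rho σ) (rhoE e σ) = 0 := by
  set c := Δl * (2 * G * (3 * ϱ / fc^2 + m0 / (Real.sqrt 6 * fc)))
  have hσ : σ = p • (1 : Mat3) + (ϱ / rho σtr) • devm σtr := by
    rw [hσdef]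
    split_ifs with hc
    · rw [smul_smul, div_eq_mul_inv]
    · rw [hϱeq, max_eq_left (by linarith), zero_div, zero_smul, add_zero]
  have hdev : devm σ = (ϱ / rho σtr) • devm σtr := by
    rw [hσ, devm_smul_one_add p (trace_smul_devm _ _)]
  have hp : pvol σ = p := by rw [hσ, pvol_smul_one_add p (trace_smul_devm _ _)]
  have hϱ : 0 ≤ ϱ := hϱeq ▸ le_max_left _ _
  have hrho : rho σ = ϱ := by
    rw [rho_of_devm_eq_smul (by positivity) hdev]
    field_simp
  refine ⟨hp, hrho, ⟨(max (rho σtr) c)⁻¹ • devm σtr,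
    inv_max_smul_devm_mem_subgradRho c hσtr hϱtr (by rwa [hϱeq] at hdev), ?_⟩, ?_⟩
  · have hϱR : ϱ / rho σtr = 1 - c / max (rho σtr) c := by
      rw [hϱeq]; exact max_zero_sub_div_eq_one_sub_div_max c hϱtr
    rw [hp, hrho, hσ, eq_sub_iff_add_eq]
    conv_rhs => rw [← smul_one_add_devm σtr]
    match_scalars
    · linear_combination hpeq
    · linear_combination hϱR
  · rw [hp, hrho, rhoE_of_devm_eq_smul e (by positivity) hdev, rhoE, if_neg hϱtr.ne', ← hfred]
    congr 1
    field_simp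

/-- Jirásek–Grassl plastic correction, converse direction. -/
theorem JG_plastic_corrector_converse
    (G K m0 fc Ag Bg ft e : ℝ)
    (hG : 0 < G) (hK : 0 < K) (hm0 : 0 < m0) (hfc : 0 < fc)
    (hAg : 0 < Ag) (hBg : 0 < Bg) (hft : 0 ≤ ft) (he : e ∈ Set.Icc (1/2 : ℝ) 1)
    (σtr : Mat3) (hσtr : σtr.IsSymm) (hϱtr : 0 < rho σtr)
    (htrial : 0 < fJG m0 fc (pvol σtr) (rho σtr) (rhoE e σtr))
    (p ϱ Δl : ℝ) (hΔl : 0 < Δl) (hϱ : 0 ≤ ϱ)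
    (hpeq : p = pvol σtr - Δl * K * mgp Ag Bg fc ft p / fc)
    (hϱeq : ϱ = max 0 (rho σtr - Δl * (2 * G * (3 * ϱ / fc^2 + m0 / (Real.sqrt 6 * fc)))))
    (hfred : fJG m0 fc p ϱ (ϱ * rW e (Real.cos (lode σtr))) = 0)
    (σ : Mat3)
    (hσdef : σ = if Δl * (2 * G * (3 * ϱ / fc^2 + m0 / (Real.sqrt 6 * fc))) < rho σtr then
        p • (1 : Mat3) + ϱ • ((rho σtr)⁻¹ • devm σtr)
      else
        p • (1 : Mat3)) :
    pvol σ = p ∧ rho σ = ϱ ∧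
    (∃ n ∈ subgradRho σ,
      σ = σtr - Δl • ((K * mgp Ag Bg fc ft (pvol σ) / fc) • (1 : Mat3) +
        (2 * G * (3 * rho σ / fc^2 + m0 / (Real.sqrt 6 * fc))) • n)) ∧
    fJG m0 fc (pvol σ) (rho σ) (rhoE e σ) = 0 :=
  JG_plastic_corrector_converse_general G K m0 fc Ag Bg ft e σtr hσtr hϱtr p ϱ Δl hpeq hϱeq hfred σ
    hσdef
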